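/- Price characterization of the simulation preorder (instance of Proposition 1): Let S = (P, Act, →) be a finite labeled transition system and p, q ∈ P. Then there exists a simulation relation R with (p,q) ∈ R if and only if no HML formula φ with expr(φ) ≤ (∞,∞,∞,∞,0,0) distinguishes p from q. -/

import Mathlib

/-! ### Energies and energy updates -/

/-- (Finite) energies: vectors in `ℕ^N`. -/
abbrev Energy (N : ℕ) := Fin N → ℕ

/-- Extended energies: vectors in `(ℕ ∪ {∞})^N`. -/
abbrev EnergyE (N : ℕ) := Fin N → ℕ∞

/-- Embedding of energies into extended energies. -/
def Energy.toE {N : ℕ} (e : Energy N) : EnergyE N := fun k => (e k : ℕ∞)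

/-- A component of an energy update: `-1`, `0`, or `min_D`. -/
inductive UpdComp (N : ℕ) : Type where
  | dec : UpdComp N
  | zero : UpdComp N
  | minOf (D : Finset (Fin N)) : UpdComp N
deriving DecidableEq

/-- An energy update: a vector of update components, where a `min_D`
component at index `k` must satisfy `k ∈ D`. -/
structure EnergyUpdate (N : ℕ) : Type where
  comp : Fin N → UpdComp N
  valid : ∀ k D, comp k = UpdComp.minOf D → k ∈ D

open Classical in
/-- Applying an energy update to an extended energy: component `k` becomes
`e k - 1`, `e k`, or `min_{d ∈ D} e d`; the result is undefined (`none`) if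
some component would become negative. -/
noncomputable def applyUpdE {N : ℕ} (e : EnergyE N) (u : EnergyUpdate N) :
    Option (EnergyE N) :=
  if ∀ k, u.comp k = UpdComp.dec → e k ≠ 0 then
    some (fun k =>
      match u.comp k with
      | UpdComp.dec => e k - 1
      | UpdComp.zero => e k
      | UpdComp.minOf D => (insert k D).inf' (Finset.insert_nonempty k D) e)
  else none

open Classical in
/-- Applying an energy update to a (finite) energy. -/
noncomputable def applyUpdN {N : ℕ} (e : Energy N) (u : EnergyUpdate N) :
    Option (Energy N) :=
  if ∀ k, u.comp k = UpdComp.dec → e k ≠ 0 then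
    some (fun k =>
      match u.comp k with
      | UpdComp.dec => e k - 1
      | UpdComp.zero => e k
      | UpdComp.minOf D => (insert k D).inf' (Finset.insert_nonempty k D) e)
  else none

/-! ### Declining energy games -/

/-- A declining `N`-dimensional energy game: positions (partitioned into defender
positions and attacker positions), moves, and a weight function assigning an
energy update to each move. -/
structure EnergyGame (N : ℕ) where
  Pos : Type
  defender : Pos → Prop
  move : Pos → Pos → Prop
  weight : Pos → Pos → EnergyUpdate N

/-- The attacker wins from position `g` with (extended) initial energy budget `e`:
inductive (attractor) characterization of the existence of an attacker winning
strategy.  (The attacker wins exactly the finite plays that get stuck at a defender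
position without the energy having become negative, so the attacker has a winning
strategy iff they can force the play into a stuck defender position in finitely
many steps while keeping all energy levels defined.) -/
inductive AttackerWins {N : ℕ} (G : EnergyGame N) : G.Pos → EnergyE N → Prop where
  | attack {g g' : G.Pos} {e e' : EnergyE N} :
      ¬ G.defender g → G.move g g' →
      applyUpdE e (G.weight g g') = some e' →
      AttackerWins G g' e' → AttackerWins G g e
  | defend {g : G.Pos} {e : EnergyE N} :
      G.defender g →
      (∀ g', G.move g g' → (applyUpdE e (G.weight g g')).isSome) →
      (∀ g' e', G.move g g' → applyUpdE e (G.weight g g') = some e' →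
        AttackerWins G g' e') →
      AttackerWins G g e
/-! ### The spectroscopy energy game -/

/-- Lifting of transition steps to sets of processes:
`stepSet step Q a = {q' | ∃ q ∈ Q, q →a q'}`. -/
def stepSet {P : Type} {Act : Type} (step : P → Act → P → Prop) (Q : Set P) (a : Act) :
    Set P := {q' | ∃ q ∈ Q, step q a q'}

/-- The actions enabled initially for a process `p`: `I(p)`. -/
def enabledActs {P : Type} {Act : Type} (step : P → Act → P → Prop) (p : P) : Set Act :=
  {a | ∃ p', step p a p'}

/-- Positions of the spectroscopy energy game: attacker positions `[p,Q]_a`,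
attacker clause positions `[p,q]_a^∧`, and defender positions `(p,Q,Q*)_d`. -/
inductive SpecPos (P : Type) : Type where
  | att (p : P) (Q : Set P)
  | attConj (p q : P)
  | defp (p : P) (Q Qs : Set P)

/-- Update `(-1,0,0,0,0,0)` of observation moves. -/
def uObs : EnergyUpdate 6 :=
  ⟨![.dec, .zero, .zero, .zero, .zero, .zero], by decide⟩

/-- Update `(0,-1,0,0,0,0)` of conjunction challenges. -/
def uConj : EnergyUpdate 6 :=
  ⟨![.zero, .dec, .zero, .zero, .zero, .zero], by decide⟩

/-- Update `(min_{1,3},0,0,0,0,0)` of conjunction revivals. -/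
def uRevival : EnergyUpdate 6 :=
  ⟨![.minOf {0, 2}, .zero, .zero, .zero, .zero, .zero], by decide⟩

/-- Update `(0,0,0,min_{3,4},0,0)` of conjunction answers. -/
def uAnswer : EnergyUpdate 6 :=
  ⟨![.zero, .zero, .zero, .minOf {2, 3}, .zero, .zero], by decide⟩

/-- Update `(min_{1,4},0,0,0,0,0)` of positive decisions. -/
def uPos : EnergyUpdate 6 :=
  ⟨![.minOf {0, 3}, .zero, .zero, .zero, .zero, .zero], by decide⟩

/-- Update `(min_{1,5},0,0,0,0,-1)` of negative decisions. -/
def uNeg : EnergyUpdate 6 :=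
  ⟨![.minOf {0, 4}, .zero, .zero, .zero, .zero, .dec], by decide⟩

/-- The moves of the spectroscopy energy game `G△`. -/
inductive SpecMove {P : Type} {Act : Type} (step : P → Act → P → Prop) :
    SpecPos P → SpecPos P → Prop where
  | obs {p p' : P} {Q : Set P} {a : Act} :
      step p a p' →
      SpecMove step (.att p Q) (.att p' (stepSet step Q a))
  | conjChallenge {p : P} {Q Qs : Set P} :
      Qs ⊆ Q →
      SpecMove step (.att p Q) (.defp p (Q \ Qs) Qs)
  | conjRevival {p : P} {Q Qs : Set P} :
      Qs ≠ ∅ →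
      SpecMove step (.defp p Q Qs) (.att p Qs)
  | conjAnswer {p q : P} {Q Qs : Set P} :
      q ∈ Q →
      SpecMove step (.defp p Q Qs) (.attConj p q)
  | posDecision {p q : P} :
      SpecMove step (.attConj p q) (.att p {q})
  | negDecision {p q : P} :
      p ≠ q →
      SpecMove step (.attConj p q) (.att q {p})

/-- The moves of the clever spectroscopy game `G▲`: like `SpecMove`, with conjunction
challenges restricted to the four subsets
`∅`, `{q ∈ Q | I(q) ⊆ I(p)}`, `{q ∈ Q | I(p) ⊆ I(q)}`, `{q ∈ Q | I(p) = I(q)}`. -/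
inductive CleverMove {P : Type} {Act : Type} (step : P → Act → P → Prop) :
    SpecPos P → SpecPos P → Prop where
  | obs {p p' : P} {Q : Set P} {a : Act} :
      step p a p' →
      CleverMove step (.att p Q) (.att p' (stepSet step Q a))
  | conjChallenge {p : P} {Q Qs : Set P} :
      (Qs = ∅ ∨
       Qs = {q ∈ Q | enabledActs step q ⊆ enabledActs step p} ∨
       Qs = {q ∈ Q | enabledActs step p ⊆ enabledActs step q} ∨
       Qs = {q ∈ Q | enabledActs step p = enabledActs step q}) →
      CleverMove step (.att p Q) (.defp p (Q \ Qs) Qs)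
  | conjRevival {p : P} {Q Qs : Set P} :
      Qs ≠ ∅ →
      CleverMove step (.defp p Q Qs) (.att p Qs)
  | conjAnswer {p q : P} {Q Qs : Set P} :
      q ∈ Q →
      CleverMove step (.defp p Q Qs) (.attConj p q)
  | posDecision {p q : P} :
      CleverMove step (.attConj p q) (.att p {q})
  | negDecision {p q : P} :
      p ≠ q →
      CleverMove step (.attConj p q) (.att q {p})

open Classical in
/-- The weight function of the spectroscopy energy game (well-defined on all moves). -/
noncomputable def specWeight {P : Type} : SpecPos P → SpecPos P → EnergyUpdate 6
  | .att _ _, .att _ _ => uObs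
  | .att _ _, .defp _ _ _ => uConj
  | .defp _ _ _, .att _ _ => uRevival
  | .defp _ _ _, .attConj _ _ => uAnswer
  | .attConj p _, .att p' _ => if p = p' then uPos else uNeg
  | _, _ => uObs

/-- The spectroscopy energy game `G△` of a labeled transition system. -/
noncomputable def specGame {P : Type} {Act : Type} (step : P → Act → P → Prop) :
    EnergyGame 6 where
  Pos := SpecPos P
  defender g := ∃ p Q Qs, g = SpecPos.defp p Q Qs
  move := SpecMove step
  weight := specWeight

/-- The clever spectroscopy energy game `G▲` of a labeled transition system. -/
noncomputable def cleverGame {P : Type} {Act : Type} (step : P → Act → P → Prop) :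
    EnergyGame 6 where
  Pos := SpecPos P
  defender g := ∃ p Q Qs, g = SpecPos.defp p Q Qs
  move := CleverMove step
  weight := specWeight
/-! ### Hennessy–Milner logic -/

/-- Hennessy–Milner logic over actions `Act`: observations `⟨a⟩φ` and finite
conjunctions `⋀ {ψ_i}` whose clauses are positive (`poss`) or negated (`negs`)
formulas. -/
inductive HML (Act : Type) : Type where
  | obs (a : Act) (φ : HML Act)
  | conj (poss : List (HML Act)) (negs : List (HML Act))

/-- HML semantics: `HML.sat step φ p` means `p ⊨ φ`. -/
def HML.sat {P : Type} {Act : Type} (step : P → Act → P → Prop) :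
    HML Act → P → Prop
  | .obs a φ, p => ∃ p', step p a p' ∧ HML.sat step φ p'
  | .conj poss negs, p =>
      (∀ φ ∈ poss, HML.sat step φ p) ∧ (∀ φ ∈ negs, ¬ HML.sat step φ p)

/-- `φ` distinguishes `p` from `q`: `p ⊨ φ` and `q ⊭ φ`. -/
def distinguishes {P : Type} {Act : Type} (step : P → Act → P → Prop)
    (φ : HML Act) (p q : P) : Prop :=
  φ.sat step p ∧ ¬ φ.sat step q

/-- Maximum (supremum) of a list of naturals, `0` for the empty list. -/
def listMax (l : List ℕ) : ℕ := l.foldr max 0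

/-- Supremum of a list of naturals after removing one maximal element
(the "other positive clauses" in the pricing). -/
def supErase (l : List ℕ) : ℕ := listMax (l.erase (listMax l))

mutual
/-- The expressiveness price `expr : HML → ℕ^6` of a formula.
Components (0-indexed): 0 — modal depth; 1 — nesting depth of conjunctions;
2 — modal depth of the deepest positive clauses; 3 — modal depth of the other
positive clauses; 4 — modal depth of negative clauses; 5 — nesting depth of
negations. -/
def HML.expr {Act : Type} : HML Act → Energy 6
  | .obs _ φ => fun k => HML.expr φ k + (if k = 0 then 1 else 0)
  | .conj poss negs =>
      let pe := exprList poss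
      let ne := exprList negs
      -- prices of the clauses (a negated clause adds 1 to component 5)
      let clauseE : List (Energy 6) :=
        pe ++ ne.map (fun v => fun k => v k + (if k = 5 then 1 else 0))
      let base : Energy 6 := fun k =>
        if k = 1 then 1 + listMax (clauseE.map (fun v => v 1))
        else if k = 2 then listMax (pe.map (fun v => v 0))
        else if k = 3 then supErase (pe.map (fun v => v 0))
        else if k = 4 then listMax (ne.map (fun v => v 0))
        else 0
      fun k => max (base k) (listMax (clauseE.map (fun v => v k)))

/-- Prices of a list of formulas. -/
def exprList {Act : Type} : List (HML Act) → List (Energy 6)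
  | [] => []
  | φ :: l => HML.expr φ :: exprList l
end

/-- The expressiveness price as an extended energy. -/
def HML.exprE {Act : Type} (φ : HML Act) : EnergyE 6 := (HML.expr φ).toE

/-- `R` is a simulation relation. -/
def IsSimulation {P Act : Type} (step : P → Act → P → Prop)
    (R : P → P → Prop) : Prop :=
  ∀ p q, R p q → ∀ a p', step p a p' → ∃ q', step q a q' ∧ R p' q'

/-! ### Auxiliary lemmas for the price characterization -/

section Aux

lemma listMax_cons (a : ℕ) (l : List ℕ) : listMax (a :: l) = max a (listMax l) := rfl

lemma listMax_append (l₁ l₂ : List ℕ) :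
    listMax (l₁ ++ l₂) = max (listMax l₁) (listMax l₂) := by
  induction l₁ with
  | nil => simp [listMax]
  | cons a t ih => simp [listMax_cons, ih, max_assoc]

lemma listMax_eq_zero_iff {l : List ℕ} : listMax l = 0 ↔ ∀ x ∈ l, x = 0 := by
  induction l with
  | nil => simp [listMax]
  | cons a t ih => simp [listMax_cons, ih]

lemma exprList_eq {Act : Type} (l : List (HML Act)) : exprList l = l.map HML.expr := by
  induction l with
  | nil => rfl
  | cons a t ih => simp [exprList, ih]

lemma expr_obs {Act : Type} (a : Act) (φ : HML Act) (k : Fin 6) :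
    (HML.obs a φ).expr k = φ.expr k + (if k = 0 then 1 else 0) := by
  simp [HML.expr]

lemma expr_conj_five {Act : Type} (poss negs : List (HML Act)) :
    (HML.conj poss negs).expr 5 =
      listMax (poss.map (fun ψ => ψ.expr 5) ++ negs.map (fun ψ => ψ.expr 5 + 1)) := by
  show max _ _ = _
  simp [exprList_eq, List.map_map, Function.comp_def]

lemma expr_conj_four_pos {Act : Type} (poss : List (HML Act)) :
    (HML.conj poss [] : HML Act).expr 4 = listMax (poss.map (fun ψ => ψ.expr 4)) := by
  show max _ _ = _
  simp [exprList_eq, List.map_map, Function.comp_def, listMax]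

lemma conj_five_zero {Act : Type} {poss negs : List (HML Act)}
    (h : (HML.conj poss negs).expr 5 = 0) :
    negs = [] ∧ ∀ ψ ∈ poss, ψ.expr 5 = 0 := by
  rw [expr_conj_five, listMax_eq_zero_iff] at h
  constructor
  · cases negs with
    | nil => rfl
    | cons ψ t =>
      exfalso
      have := h (ψ.expr 5 + 1) (by simp)
      omega
  · intro ψ hψ
    exact h _ (by simp; exact Or.inl ⟨ψ, hψ, rfl⟩)

/-- Structural induction principle for `HML` handling the nested lists. -/
theorem HML.ind {Act : Type} {M : HML Act → Prop}
    (hobs : ∀ a φ, M φ → M (.obs a φ))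
    (hconj : ∀ poss negs, (∀ φ ∈ poss, M φ) → M (.conj poss negs)) :
    ∀ φ, M φ
  | .obs a φ => hobs a φ (HML.ind hobs hconj φ)
  | .conj poss negs => hconj poss negs (fun φ h => HML.ind hobs hconj φ)
termination_by φ => sizeOf φ
decreasing_by
  · simp
  · have := List.sizeOf_lt_of_mem h
    simp
    omega

/-- Formulas satisfied at related states are preserved by simulations,
provided they contain no negations. -/
lemma sat_of_sim {P Act : Type} {step : P → Act → P → Prop} {R : P → P → Prop}
    (hR : IsSimulation step R) :
    ∀ φ : HML Act, φ.expr 5 = 0 →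
      ∀ p q, R p q → φ.sat step p → φ.sat step q := by
  intro φ
  induction φ using HML.ind with
  | hobs a ψ ih =>
    intro h5 p q hpq hsat
    have hψ5 : ψ.expr 5 = 0 := by
      have := expr_obs a ψ 5
      simp at this
      omega
    simp only [HML.sat] at hsat
    obtain ⟨p', hstep, hsat'⟩ := hsat
    obtain ⟨q', hstep', hR'⟩ := hR p q hpq a p' hstep
    simp only [HML.sat]
    exact ⟨q', hstep', ih hψ5 p' q' hR' hsat'⟩
  | hconj poss negs ih =>
    intro h5 p q hpq hsat
    obtain ⟨hnegs, hposs5⟩ := conj_five_zero h5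
    subst hnegs
    simp only [HML.sat] at hsat ⊢
    refine ⟨?_, by simp⟩
    intro ψ hψ
    exact ih ψ hψ (hposs5 ψ hψ) p q hpq (hsat.1 ψ hψ)

/-- Negation-free formulas. -/
inductive PositiveHML {Act : Type} : HML Act → Prop where
  | obs (a : Act) (φ : HML Act) : PositiveHML φ → PositiveHML (.obs a φ)
  | conj (poss : List (HML Act)) : (∀ φ ∈ poss, PositiveHML φ) →
      PositiveHML (.conj poss [])

lemma pos_price {Act : Type} {φ : HML Act} (h : PositiveHML φ) :
    φ.expr 4 = 0 ∧ φ.expr 5 = 0 := by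
  induction h with
  | obs a ψ hψ ih =>
    have h4 := expr_obs a ψ 4
    have h5 := expr_obs a ψ 5
    simp at h4 h5
    omega
  | conj poss hposs ih =>
    constructor
    · rw [expr_conj_four_pos, listMax_eq_zero_iff]
      simp only [List.mem_map, forall_exists_index, and_imp]
      rintro x ψ hψ rfl
      exact (ih ψ hψ).1
    · rw [expr_conj_five, listMax_eq_zero_iff]
      simp only [List.map_nil, List.append_nil, List.mem_map,
        forall_exists_index, and_imp]
      rintro x ψ hψ rfl
      exact (ih ψ hψ).2

end Aux

/-- **Price characterization of the simulation preorder** (instance of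
Proposition 1): there is a simulation containing `(p,q)` iff no formula of price
`≤ (∞,∞,∞,∞,0,0)` distinguishes `p` from `q`. -/
theorem simulation_price_characterization {P Act : Type} [Fintype P] [Fintype Act]
    (step : P → Act → P → Prop) (p q : P) :
    (∃ R : P → P → Prop, IsSimulation step R ∧ R p q) ↔
      ¬ ∃ φ : HML Act,
        φ.exprE ≤ (![⊤, ⊤, ⊤, ⊤, 0, 0] : EnergyE 6) ∧ distinguishes step φ p q := by
  classical
  constructor
  · rintro ⟨R, hR, hpq⟩ ⟨φ, hle, hsatp, hnsatq⟩
    have h5 : φ.expr 5 = 0 := by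
      have h' : ((φ.expr 5 : ℕ) : ℕ∞) ≤ (0 : ℕ∞) := hle 5
      have := le_antisymm h' zero_le
      exact_mod_cast this
    exact hnsatq (sat_of_sim hR φ h5 p q hpq hsatp)
  · intro h
    refine ⟨fun r s => ∀ φ : HML Act, PositiveHML φ → φ.sat step r → φ.sat step s,
      ?_, ?_⟩
    · intro r s hrs a r' hstep
      by_contra hcon
      push_neg at hcon
      have hchoice : ∀ s' : P, ∃ φ : HML Act, PositiveHML φ ∧ φ.sat step r' ∧
          (step s a s' → ¬ φ.sat step s') := by
        intro s'
        by_cases hst : step s a s'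
        · have := hcon s' hst
          obtain ⟨φ, hφpos, hφr', hφs'⟩ := this
          exact ⟨φ, hφpos, hφr', fun _ => hφs'⟩
        · exact ⟨.conj [] [], .conj [] (by simp), by simp [HML.sat],
            fun hc => absurd hc hst⟩
      choose f hfpos hfr' hfs' using hchoice
      set L : List (HML Act) := (Finset.univ : Finset P).toList.map f with hL
      have hψpos : PositiveHML (.obs a (.conj L [])) := by
        refine .obs a _ (.conj L ?_)
        intro φ hφ
        simp [hL] at hφ
        obtain ⟨s', rfl⟩ := hφ
        exact hfpos s'
      have hψr : (HML.obs a (.conj L [])).sat step r := by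
        simp only [HML.sat]
        refine ⟨r', hstep, ?_, by simp⟩
        intro φ hφ
        simp [hL] at hφ
        obtain ⟨s', rfl⟩ := hφ
        exact hfr' s'
      have hψs := hrs _ hψpos hψr
      simp only [HML.sat] at hψs
      obtain ⟨s', hstep', hconj, -⟩ := hψs
      exact hfs' s' hstep' (hconj (f s') (by simp [hL]))
    · intro φ hφpos hsatp
      by_contra hnsatq
      obtain ⟨h4, h5⟩ := pos_price hφpos
      refine h ⟨φ, ?_, hsatp, hnsatq⟩
      intro k
      fin_cases k <;>
        simp [HML.exprE, Energy.toE, h4, h5]
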